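/- Let q ≥ 3 be an integer, let g ∈ G_q, let P = g(V_0) be a face of the Farey graph 𝓕_q, and let x = g(ρ^a(∞)) and y = g(ρ^b(∞)) with 0 ≤ a < b ≤ q−1 and x ≠ y. Then every geodesic path in 𝓕_q from x to y has all of its vertices in P. Moreover, if q is even and b − a = q/2 then there are exactly two geodesic paths in 𝓕_q from x to y, and otherwise there is exactly one. -/

import Mathlib

open OnePoint

noncomputable def lamq (q : ℕ) : ℝ := 2 * Real.cos (Real.pi / q)

abbrev RInf : Type := OnePoint ℝ

noncomputable def sigmaFun : RInf → RInf := fun z =>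
  match z with
  | Option.none => ((0 : ℝ) : RInf)
  | Option.some x => if x = 0 then (∞ : RInf) else ((-x⁻¹ : ℝ) : RInf)

lemma sigmaFun_invol (z : RInf) : sigmaFun (sigmaFun z) = z := by
  cases z with
  | none => simp [sigmaFun, OnePoint.infty] <;> rfl
  | some x =>
    by_cases h : x = 0
    · simp only [sigmaFun, h, if_true, if_pos]
      rfl
    · simp only [sigmaFun, h, if_false]
      have h1 : (-x⁻¹ : ℝ) ≠ 0 := by simpa using h
      simp only [h1, if_false]
      have h2 : (-(-x⁻¹)⁻¹ : ℝ) = x := by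
        rw [inv_neg, inv_inv, neg_neg]
      rw [h2]
      rfl

noncomputable def sigmaP : Equiv.Perm RInf :=
  ⟨sigmaFun, sigmaFun, sigmaFun_invol, sigmaFun_invol⟩

noncomputable def tauP (q : ℕ) : Equiv.Perm RInf where
  toFun z := match z with
    | Option.none => (∞ : RInf)
    | Option.some x => Option.some (x + lamq q)
  invFun z := match z with
    | Option.none => (∞ : RInf)
    | Option.some x => Option.some (x - lamq q)
  left_inv z := by cases z <;> simp [OnePoint.infty] <;> rfl
  right_inv z := by cases z <;> simp [OnePoint.infty] <;> rfl

noncomputable def Gq (q : ℕ) : Subgroup (Equiv.Perm RInf) :=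
  Subgroup.closure {sigmaP, tauP q}

def FareyVertex (q : ℕ) (v : RInf) : Prop := ∃ g ∈ Gq q, g ∞ = v

def FareyAdj (q : ℕ) (u v : RInf) : Prop :=
  u ≠ v ∧ ∃ g ∈ Gq q,
    ((g ((0:ℝ) : RInf) = u ∧ g ∞ = v) ∨ (g ((0:ℝ) : RInf) = v ∧ g ∞ = u))

noncomputable def rhoP (q : ℕ) : Equiv.Perm RInf := tauP q * sigmaP

def V0 (q : ℕ) : Set RInf := {v | ∃ i : ℕ, i < q ∧ (rhoP q ^ i) ∞ = v}

def IsFace (q : ℕ) (P : Set RInf) : Prop := ∃ g ∈ Gq q, P = ⇑g '' V0 q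

/-- `y` lies in the connected component of `ℝ∞ \ {u, v}` that does not contain `x`. -/
def SepSide (u v x y : RInf) : Prop :=
  y ∈ ({u, v}ᶜ : Set RInf) ∧ x ∉ connectedComponentIn ({u, v}ᶜ : Set RInf) y

noncomputable def Tq (q : ℕ) (b : ℤ) : RInf → RInf := fun z =>
  match z with
  | Option.none => ((b * lamq q : ℝ) : RInf)
  | Option.some x => if x = 0 then (∞ : RInf) else ((b * lamq q - x⁻¹ : ℝ) : RInf)

noncomputable def RosenValue (q : ℕ) (bs : List ℤ) : RInf := bs.foldr (Tq q) ∞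

def IsGeodesicRosen (q : ℕ) (bs : List ℤ) : Prop :=
  bs ≠ [] ∧ RosenValue q bs ≠ ∞ ∧
  ∀ cs : List ℤ, cs ≠ [] → RosenValue q cs = RosenValue q bs → bs.length ≤ cs.length

def IsPathFrom (q : ℕ) (p : List RInf) (x y : RInf) : Prop :=
  p.Chain' (FareyAdj q) ∧ p.head? = Option.some x ∧ p.getLast? = Option.some y

def IsGeodesicPath (q : ℕ) (p : List RInf) (x y : RInf) : Prop :=
  IsPathFrom q p x y ∧ ∀ p' : List RInf, IsPathFrom q p' x y → p.length ≤ p'.length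

/-- `{u, v}` is a pair of `y`-parents of `x`. -/
def IsParentPair (q : ℕ) (y x u v : RInf) : Prop :=
  ∃ g ∈ Gq q, ∃ i : ℤ,
    g ((rhoP q ^ i) ∞) = x ∧
    ({u, v} : Set RInf) = {g ((rhoP q ^ (i-1)) ∞), g ((rhoP q ^ (i+1)) ∞)} ∧
    SepSide u v x y

/-- `P 0, …, P (n-1)` is the q-chain from `x` to `y`. -/
def IsQChain (q : ℕ) (x y : RInf) (n : ℕ) (P : ℕ → Set RInf) : Prop :=
  1 ≤ n ∧ (∀ j < n, IsFace q (P j)) ∧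
  (∃ g ∈ Gq q, ∃ i : ℤ,
      g ((rhoP q ^ i) ∞) = x ∧ P 0 = ⇑g '' V0 q ∧
      SepSide (g ((rhoP q ^ (i-1)) ∞)) (g ((rhoP q ^ (i+1)) ∞)) x y) ∧
  y ∈ P (n-1) ∧ (∀ j, j < n - 1 → y ∉ P j) ∧
  (∀ j, j + 1 < n → ∃ a b : RInf, FareyAdj q a b ∧ a ∈ P j ∧ b ∈ P j ∧
      (y ∈ ({a, b}ᶜ : Set RInf) ∧
        ∀ w ∈ P j, w ∉ connectedComponentIn ({a, b}ᶜ : Set RInf) y) ∧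
      P (j+1) ≠ P j ∧ a ∈ P (j+1) ∧ b ∈ P (j+1))

/-- Fibonacci numbers with `F 0 = 1`, `F 1 = 2`. -/
def fibF : ℕ → ℕ
  | 0 => 1
  | 1 => 2
  | (n+2) => fibF (n+1) + fibF n

/-!
The matrix of `ρ = τσ : z ↦ λ_q - 1/z` has powers `ρⁿ = [[Uₙ, -Uₙ₋₁], [Uₙ₋₁, -Uₙ₋₂]]`, where
`Uₙ = Uₙ(cos (π/q)) = sin ((n+1)π/q) / sin (π/q)`. Hence `ρ^q = 1`, the vertices `ρᵏ(∞)`,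
`0 < k < q - 1`, of the base face `V₀` are positive reals, `ρ^(q-1)(∞) = 0`, and the images
`ρʲ(N)` of the non-positive arc `N = [-∞, 0]` are the `q` arcs between consecutive vertices of
`V₀`. Ping-pong (`σ` maps the non-negative arc into `N` and each `ρᵏ`, `0 < k < q`, maps `N` back),
applied to the normal form `σᵉ ρ^k₁ σ ⋯ ρ^kₘ σ ρʳ` of an element of `G_q`, shows that no edge of
`𝓕_q` crosses a face: both ends of an edge lie on one arc of the face.

So the potential equal to twice the cyclic distance to `y` at the vertices of the face `P`, and to
the sum of the distances of the two ends of its arc at any other point, drops by at most `2` along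
an edge, and by exactly `2` only along a side of `P` toward `y`. A geodesic from `x` to `y`, no
longer than the shorter way around `P`, must therefore go around `P` toward `y` without turning
back; it goes the shorter way, and when `x` and `y` are opposite either way will do.
-/

section Generators

lemma sigmaP_infty : sigmaP ∞ = ((0 : ℝ) : RInf) := rfl

lemma sigmaP_zero : sigmaP ((0 : ℝ) : RInf) = ∞ := by
  simp [sigmaP, sigmaFun]

lemma sigmaP_coe {r : ℝ} (hr : r ≠ 0) : sigmaP r = ((-r⁻¹ : ℝ) : RInf) := by
  simp [sigmaP, sigmaFun, hr]

lemma sigmaP_mul_self : sigmaP * sigmaP = 1 :=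
  Equiv.ext sigmaFun_invol

lemma sigmaP_mem_Gq (q : ℕ) : sigmaP ∈ Gq q :=
  Subgroup.subset_closure (by simp)

lemma tauP_mem_Gq (q : ℕ) : tauP q ∈ Gq q :=
  Subgroup.subset_closure (by simp)

lemma rhoP_mem_Gq (q : ℕ) : rhoP q ∈ Gq q :=
  mul_mem (tauP_mem_Gq q) (sigmaP_mem_Gq q)

lemma rhoP_mul_sigmaP (q : ℕ) : rhoP q * sigmaP = tauP q := by
  rw [rhoP, mul_assoc, sigmaP_mul_self, mul_one]

lemma tauP_coe (q : ℕ) (r : ℝ) : tauP q r = ((r + lamq q : ℝ) : RInf) := rfl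

lemma FareyAdj.symm {q : ℕ} {u v : RInf} (h : FareyAdj q u v) : FareyAdj q v u :=
  ⟨h.1.symm, h.2.imp fun _ ⟨hh, hends⟩ => ⟨hh, hends.symm⟩⟩

lemma rhoP_zero (q : ℕ) : rhoP q ((0 : ℝ) : RInf) = ∞ := by
  simp only [rhoP, Equiv.Perm.mul_apply, sigmaP_zero]
  rfl

end Generators

section Chebyshev

open Polynomial.Chebyshev Real

noncomputable def chebU (q : ℕ) (n : ℤ) : ℝ := (U ℝ n).eval (cos (π / q))

variable {q : ℕ}

lemma chebU_add_one (n : ℤ) : chebU q (n + 1) = lamq q * chebU q n - chebU q (n - 1) := by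
  simp [chebU, U_add_one, lamq]

lemma chebU_neg_one : chebU q (-1) = 0 := by simp [chebU]

lemma chebU_zero : chebU q 0 = 1 := by simp [chebU]

lemma chebU_neg_two : chebU q (-2) = -1 := by simp [chebU]

lemma sin_pi_div_pos (hq : 2 ≤ q) : 0 < sin (π / q) := by
  have : (2 : ℝ) ≤ q := by exact_mod_cast hq
  apply sin_pos_of_pos_of_lt_pi (by positivity)
  rw [div_lt_iff₀ (by linarith)]
  nlinarith [pi_pos]

lemma chebU_mul_sin (n : ℤ) : chebU q n * sin (π / q) = sin ((n + 1) * (π / q)) :=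
  U_real_cos _ n

lemma chebU_pos {n : ℤ} (h0 : 0 ≤ n) (hn : n + 2 ≤ q) : 0 < chebU q n := by
  have hq : 2 ≤ q := by omega
  have hs := sin_pi_div_pos hq
  have hq' : (0 : ℝ) < q := by positivity
  have hn' : (n : ℝ) + 2 ≤ q := by exact_mod_cast hn
  refine pos_of_mul_pos_left (b := sin (π / q)) ?_ hs.le
  rw [chebU_mul_sin]
  apply sin_pos_of_pos_of_lt_pi
  · have : (0 : ℝ) ≤ n := by exact_mod_cast h0
    positivity
  · rw [← mul_div_assoc, div_lt_iff₀ hq']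
    nlinarith [pi_pos]

lemma chebU_nonneg (hq : 2 ≤ q) {n : ℤ} (h0 : -1 ≤ n) (hn : n + 1 ≤ q) : 0 ≤ chebU q n := by
  have hs := sin_pi_div_pos hq
  have hq' : (0 : ℝ) < q := by positivity
  have h0' : (-1 : ℝ) ≤ n := by exact_mod_cast h0
  have hn' : (n : ℝ) + 1 ≤ q := by exact_mod_cast hn
  refine nonneg_of_mul_nonneg_left (b := sin (π / q)) ?_ hs
  rw [chebU_mul_sin]
  apply sin_nonneg_of_nonneg_of_le_pi
  · apply mul_nonneg (by linarith) (by positivity)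
  · rw [← mul_div_assoc, div_le_iff₀ hq']
    nlinarith [pi_pos]

lemma chebU_eq_of_sin_eq (hq : 2 ≤ q) {n : ℤ} {c : ℝ}
    (h : sin ((n + 1) * (π / q)) = c * sin (π / q)) : chebU q n = c := by
  have hs := sin_pi_div_pos hq
  rw [← mul_left_inj' hs.ne', chebU_mul_sin, h]

lemma chebU_sub_one_self (hq : 2 ≤ q) : chebU q (q - 1) = 0 := by
  apply chebU_eq_of_sin_eq hq
  have : (q : ℝ) ≠ 0 := by positivity
  push_cast
  rw [sub_add_cancel, mul_div_cancel₀ _ this, sin_pi, zero_mul]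

lemma chebU_sub_two_self (hq : 2 ≤ q) : chebU q (q - 2) = 1 := by
  apply chebU_eq_of_sin_eq hq
  have : (q : ℝ) ≠ 0 := by positivity
  push_cast
  rw [show ((q : ℝ) - 2 + 1) * (π / q) = π - π / q by field_simp; ring, sin_pi_sub, one_mul]

lemma chebU_self (hq : 2 ≤ q) : chebU q q = -1 := by
  apply chebU_eq_of_sin_eq hq
  have : (q : ℝ) ≠ 0 := by positivity
  rw [show ((q : ℤ) + 1 : ℝ) * (π / q) = π / q + π by push_cast; field_simp; ring, sin_add_pi,
    neg_one_mul]

end Chebyshev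

section Mobius

open Matrix

variable {q : ℕ}

noncomputable def rhoGL (q : ℕ) : GL (Fin 2) ℝ :=
  GeneralLinearGroup.mkOfDetNeZero !![lamq q, -1; 1, 0] (by simp [det_fin_two])

lemma coe_rhoGL : (rhoGL q : Matrix (Fin 2) (Fin 2) ℝ) = !![lamq q, -1; 1, 0] := rfl

lemma rhoGL_pow (n : ℕ) : ((rhoGL q ^ n : GL (Fin 2) ℝ) : Matrix (Fin 2) (Fin 2) ℝ) =
    !![chebU q n, -chebU q (n - 1); chebU q (n - 1), -chebU q (n - 2)] := by
  induction n with
  | zero => simp [chebU_zero, chebU_neg_one, chebU_neg_two, Matrix.one_fin_two]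
  | succ n ih =>
    have h1 := chebU_add_one (q := q) n
    have h2 := chebU_add_one (q := q) (n - 1)
    rw [sub_add_cancel, sub_sub, one_add_one_eq_two] at h2
    rw [pow_succ, Units.val_mul, ih, coe_rhoGL, mul_fin_two]
    push_cast
    rw [add_sub_cancel_right, show (n : ℤ) + 1 - 2 = n - 1 by ring, h1, h2]
    ext i j
    fin_cases i <;> fin_cases j <;> simp <;> ring

lemma rhoP_apply (z : RInf) : rhoP q z = rhoGL q • z := by
  induction z using OnePoint.rec with
  | infty =>
    rw [smul_infty_eq_ite]
    simp [coe_rhoGL, rhoP, sigmaP_infty, tauP_coe]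
  | coe r =>
    rw [smul_some_eq_ite]
    by_cases hr : r = 0
    · subst hr
      simp [coe_rhoGL, rhoP_zero]
    · simp only [coe_rhoGL, rhoP, Equiv.Perm.mul_apply, sigmaP_coe hr, tauP_coe]
      simp only [of_apply, cons_val', cons_val_zero, cons_val_one, empty_val',
        cons_val_fin_one, one_mul, add_zero, if_neg hr]
      congr 1
      field_simp
      ring

lemma rhoP_pow_apply (n : ℕ) (z : RInf) : (rhoP q ^ n) z = (rhoGL q ^ n) • z := by
  induction n with
  | zero => simp
  | succ n ih => rw [pow_succ', Equiv.Perm.mul_apply, ih, rhoP_apply, pow_succ', mul_smul]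

lemma rhoP_pow_infty (n : ℕ) : (rhoP q ^ n) ∞ =
    if chebU q (n - 1) = 0 then ∞ else ((chebU q n / chebU q (n - 1) : ℝ) : RInf) := by
  rw [rhoP_pow_apply, smul_infty_eq_ite, rhoGL_pow]
  simp

lemma rhoP_pow_coe (n : ℕ) (r : ℝ) : (rhoP q ^ n) r =
    if chebU q (n - 1) * r - chebU q (n - 2) = 0 then ∞
    else (((chebU q n * r - chebU q (n - 1)) / (chebU q (n - 1) * r - chebU q (n - 2)) : ℝ) :
      RInf) := by
  rw [rhoP_pow_apply, smul_some_eq_ite, rhoGL_pow]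
  simp [sub_eq_add_neg]

lemma rhoP_pow_self (hq : 2 ≤ q) : rhoP q ^ q = 1 := by
  ext z : 1
  induction z using OnePoint.rec with
  | infty => simp [rhoP_pow_infty, chebU_sub_one_self hq]
  | coe r =>
    rw [rhoP_pow_coe]
    simp [chebU_self hq, chebU_sub_one_self hq, chebU_sub_two_self hq]

lemma rhoP_pow_infty_of_lt {k : ℕ} (hk : 1 ≤ k) (hkq : k < q) :
    (rhoP q ^ k) ∞ = ((chebU q k / chebU q (k - 1) : ℝ) : RInf) := by
  rw [rhoP_pow_infty, if_neg (chebU_pos (by omega) (by omega)).ne']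

end Mobius

section Arcs

variable {q : ℕ}

def nonposArc : Set RInf := insert ∞ (((↑) : ℝ → RInf) '' Set.Iic 0)

def nonnegArc : Set RInf := insert ∞ (((↑) : ℝ → RInf) '' Set.Ici 0)

@[simp] lemma infty_mem_nonposArc : ∞ ∈ nonposArc := Set.mem_insert _ _

@[simp] lemma infty_mem_nonnegArc : ∞ ∈ nonnegArc := Set.mem_insert _ _

@[simp] lemma coe_mem_nonposArc {r : ℝ} : (r : RInf) ∈ nonposArc ↔ r ≤ 0 := by
  simp [nonposArc]

@[simp] lemma coe_mem_nonnegArc {r : ℝ} : (r : RInf) ∈ nonnegArc ↔ 0 ≤ r := by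
  simp [nonnegArc]

lemma nonposArc_inter_nonnegArc : nonposArc ∩ nonnegArc = {∞, ((0 : ℝ) : RInf)} := by
  ext z
  induction z using OnePoint.rec with
  | infty => simp
  | coe r => simp [le_antisymm_iff]

lemma sigmaP_mem_nonposArc {z : RInf} (hz : z ∈ nonnegArc) : sigmaP z ∈ nonposArc := by
  induction z using OnePoint.rec with
  | infty => simp [sigmaP_infty]
  | coe r =>
    rcases eq_or_ne r 0 with rfl | hr
    · simp [sigmaP_zero]
    · rw [coe_mem_nonnegArc] at hz
      rw [sigmaP_coe hr, coe_mem_nonposArc, neg_nonpos]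
      positivity

lemma rhoP_pow_mem_nonnegArc {k : ℕ} (hk : 1 ≤ k) (hkq : k < q) {z : RInf}
    (hz : z ∈ nonposArc) : (rhoP q ^ k) z ∈ nonnegArc := by
  have hq : 2 ≤ q := by omega
  have hu₀ : 0 ≤ chebU q k := chebU_nonneg hq (by omega) (by omega)
  have hu₁ : 0 < chebU q (k - 1) := chebU_pos (by omega) (by omega)
  have hu₂ : 0 ≤ chebU q (k - 2) := chebU_nonneg hq (by omega) (by omega)
  induction z using OnePoint.rec with
  | infty =>
    rw [rhoP_pow_infty_of_lt hk hkq, coe_mem_nonnegArc]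
    positivity
  | coe r =>
    rw [coe_mem_nonposArc] at hz
    rw [rhoP_pow_coe]
    split_ifs with hden
    · exact infty_mem_nonnegArc
    · rw [coe_mem_nonnegArc]
      apply div_nonneg_of_nonpos
      · nlinarith
      · nlinarith

end Arcs

section NormalForm

variable {q : ℕ}

noncomputable def syllableProd (q : ℕ) (L : List ℕ) : Equiv.Perm RInf :=
  (L.map fun k => rhoP q ^ k * sigmaP).prod

def HasNormalForm (q : ℕ) (h : Equiv.Perm RInf) : Prop :=
  ∃ (e r : ℕ) (L : List ℕ), (∀ k ∈ L, 1 ≤ k ∧ k < q) ∧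
    h = sigmaP ^ e * syllableProd q L * rhoP q ^ r

lemma HasNormalForm.mul_rhoP_pow {h : Equiv.Perm RInf} (hh : HasNormalForm q h) (n : ℕ) :
    HasNormalForm q (h * rhoP q ^ n) := by
  obtain ⟨e, r, L, hL, rfl⟩ := hh
  exact ⟨e, r + n, L, hL, by rw [pow_add, mul_assoc]⟩

lemma HasNormalForm.mul_sigmaP (hq : 2 ≤ q) {h : Equiv.Perm RInf} (hh : HasNormalForm q h) :
    HasNormalForm q (h * sigmaP) := by
  obtain ⟨e, r, L, hL, rfl⟩ := hh
  rw [pow_eq_pow_mod r (rhoP_pow_self hq)]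
  by_cases hr : r % q = 0
  · rw [hr, pow_zero, mul_one]
    rcases L.eq_nil_or_concat with rfl | ⟨L', k, rfl⟩
    · exact ⟨e + 1, 0, [], by simp, by simp [syllableProd, pow_succ]⟩
    · refine ⟨e, k, L', fun j hj => hL j (by simp [hj]), ?_⟩
      simp [syllableProd, mul_assoc, sigmaP_mul_self]
  · refine ⟨e, 0, L ++ [r % q], ?_, ?_⟩
    · simp only [List.mem_append, List.mem_singleton]
      rintro k (hk | rfl)
      exacts [hL k hk, ⟨by omega, Nat.mod_lt _ (by omega)⟩]
    · simp [syllableProd, mul_assoc]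

lemma hasNormalForm_of_mem_Gq (hq : 2 ≤ q) {h : Equiv.Perm RInf} (hh : h ∈ Gq q) :
    HasNormalForm q h := by
  have hone : HasNormalForm q 1 := ⟨0, 0, [], by simp, by simp [syllableProd]⟩
  have htau : ∀ x, HasNormalForm q x → HasNormalForm q (x * tauP q) := fun x hx => by
    simpa [mul_assoc, rhoP_mul_sigmaP] using (hx.mul_rhoP_pow 1).mul_sigmaP hq
  have htau_inv : ∀ x, HasNormalForm q x → HasNormalForm q (x * (tauP q)⁻¹) := fun x hx => by
    have hinv : (tauP q)⁻¹ = sigmaP * rhoP q ^ (q - 1) := by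
      refine inv_eq_of_mul_eq_one_right ?_
      rw [← rhoP_mul_sigmaP, mul_assoc, ← mul_assoc sigmaP, sigmaP_mul_self, one_mul,
        ← pow_succ', Nat.sub_add_cancel (by omega), rhoP_pow_self hq]
    simpa [hinv, mul_assoc] using (hx.mul_sigmaP hq).mul_rhoP_pow (q - 1)
  refine Subgroup.closure_induction_right (p := fun x _ => HasNormalForm q x) hone ?_ ?_ hh
  · rintro x - s (rfl | rfl) hx
    exacts [hx.mul_sigmaP hq, htau x hx]
  · rintro x - s (rfl | rfl) hx
    · simpa [inv_eq_of_mul_eq_one_right sigmaP_mul_self] using hx.mul_sigmaP hq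
    · exact htau_inv x hx

end NormalForm

section EdgeLemma

variable {q : ℕ}

lemma sigmaP_pow_eq_one_or_eq (e : ℕ) : sigmaP ^ e = 1 ∨ sigmaP ^ e = sigmaP := by
  induction e with
  | zero => exact Or.inl rfl
  | succ e ih =>
    rcases ih with h | h <;> rw [pow_succ, h]
    exacts [Or.inr (one_mul _), Or.inl sigmaP_mul_self]

lemma rhoP_pow_mem_nonnegArc_of_mem_inter (hq : 2 ≤ q) (r : ℕ) {z : RInf}
    (hz : z ∈ nonposArc ∩ nonnegArc) : (rhoP q ^ r) z ∈ nonnegArc := by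
  rw [pow_eq_pow_mod r (rhoP_pow_self hq)]
  rcases Nat.eq_zero_or_pos (r % q) with hr | hr
  · rw [hr, pow_zero, Equiv.Perm.one_apply]
    exact hz.2
  · exact rhoP_pow_mem_nonnegArc hr (Nat.mod_lt _ (by omega)) hz.1

lemma syllableProd_apply_mem {L : List ℕ} (hL : ∀ k ∈ L, 1 ≤ k ∧ k < q) {x y : RInf}
    (hx : x ∈ nonnegArc) (hy : y ∈ nonnegArc)
    (hxy : ∃ j : ℕ, x ∈ ⇑(rhoP q ^ j) '' nonposArc ∧ y ∈ ⇑(rhoP q ^ j) '' nonposArc) :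
    syllableProd q L x ∈ nonnegArc ∧ syllableProd q L y ∈ nonnegArc ∧
      ∃ j : ℕ, syllableProd q L x ∈ ⇑(rhoP q ^ j) '' nonposArc ∧
        syllableProd q L y ∈ ⇑(rhoP q ^ j) '' nonposArc := by
  induction L with
  | nil => exact ⟨hx, hy, hxy⟩
  | cons k L ih =>
    obtain ⟨hk1, hkq⟩ := hL k (List.mem_cons_self ..)
    obtain ⟨hx', hy', -⟩ := ih fun j hj => hL j (List.mem_cons_of_mem _ hj)
    simp only [syllableProd, List.map_cons, List.prod_cons, Equiv.Perm.mul_apply]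
    have hσx := sigmaP_mem_nonposArc hx'
    have hσy := sigmaP_mem_nonposArc hy'
    exact ⟨rhoP_pow_mem_nonnegArc hk1 hkq hσx, rhoP_pow_mem_nonnegArc hk1 hkq hσy,
      k, ⟨_, hσx, rfl⟩, ⟨_, hσy, rfl⟩⟩

lemma exists_arc_of_mem_Gq (hq : 2 ≤ q) {h : Equiv.Perm RInf} (hh : h ∈ Gq q) :
    ∃ j : ℕ, h ((0 : ℝ) : RInf) ∈ ⇑(rhoP q ^ j) '' nonposArc ∧
      h ∞ ∈ ⇑(rhoP q ^ j) '' nonposArc := by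
  obtain ⟨e, r, L, hL, rfl⟩ := hasNormalForm_of_mem_Gq hq hh
  have h0 : ((0 : ℝ) : RInf) ∈ nonposArc ∩ nonnegArc := by simp [nonposArc_inter_nonnegArc]
  have hinf : ∞ ∈ nonposArc ∩ nonnegArc := by simp [nonposArc_inter_nonnegArc]
  obtain ⟨hx, hy, hxy⟩ := syllableProd_apply_mem hL
    (rhoP_pow_mem_nonnegArc_of_mem_inter hq r h0) (rhoP_pow_mem_nonnegArc_of_mem_inter hq r hinf)
    ⟨r, ⟨_, h0.1, rfl⟩, ⟨_, hinf.1, rfl⟩⟩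
  simp only [Equiv.Perm.mul_apply]
  rcases sigmaP_pow_eq_one_or_eq e with he | he <;> rw [he]
  · exact hxy
  · refine ⟨0, ?_, ?_⟩ <;> simp only [pow_zero, Equiv.Perm.coe_one, Set.image_id]
    exacts [sigmaP_mem_nonposArc hx, sigmaP_mem_nonposArc hy]

end EdgeLemma

section Face

variable {q : ℕ}

noncomputable def rhoPow (q : ℕ) (i : ZMod q) : Equiv.Perm RInf := rhoP q ^ i.val

lemma rhoPow_natCast (hq : 2 ≤ q) (n : ℕ) : rhoPow q n = rhoP q ^ n := by
  rw [rhoPow, ZMod.val_natCast, ← pow_eq_pow_mod n (rhoP_pow_self hq)]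

lemma rhoPow_add (hq : 2 ≤ q) (i j : ZMod q) : rhoPow q (i + j) = rhoPow q i * rhoPow q j := by
  have : NeZero q := ⟨by omega⟩
  rw [← ZMod.natCast_zmod_val i, ← ZMod.natCast_zmod_val j, ← Nat.cast_add,
    rhoPow_natCast hq, rhoPow_natCast hq, rhoPow_natCast hq, pow_add]

lemma rhoPow_neg_one_infty (hq : 2 ≤ q) : rhoPow q (-1) ∞ = ((0 : ℝ) : RInf) := by
  have h := rhoPow_add hq (-1) 1
  rw [neg_add_cancel, show rhoPow q 1 = rhoP q by simpa using rhoPow_natCast hq 1] at h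
  rw [← rhoP_zero q, ← Equiv.Perm.mul_apply, ← h]
  simp [rhoPow]

lemma rhoPow_mem_nonnegArc [NeZero q] {m : ZMod q} (hm : m ≠ 0) {z : RInf}
    (hz : z ∈ nonposArc) : rhoPow q m z ∈ nonnegArc :=
  rhoP_pow_mem_nonnegArc (ZMod.val_pos.2 hm) (ZMod.val_lt m) hz

lemma rhoPow_infty_eq_infty_iff (hq : 2 ≤ q) {m : ZMod q} : rhoPow q m ∞ = ∞ ↔ m = 0 := by
  have : NeZero q := ⟨by omega⟩
  refine ⟨fun h => ?_, fun h => by simp [h, rhoPow]⟩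
  by_contra hm
  rw [rhoPow, rhoP_pow_infty_of_lt (ZMod.val_pos.2 hm) (ZMod.val_lt m)] at h
  exact OnePoint.coe_ne_infty _ h

lemma rhoPow_infty_mem_nonposArc_iff (hq : 2 ≤ q) {m : ZMod q} :
    rhoPow q m ∞ ∈ nonposArc ↔ m = 0 ∨ m = -1 := by
  have : NeZero q := ⟨by omega⟩
  refine ⟨fun h => ?_, ?_⟩
  · by_contra! hm
    have hlast : m.val + 1 ≠ q := fun hq' => hm.2 <| eq_neg_of_add_eq_zero_left <| by
      rw [← ZMod.natCast_zmod_val m, ← Nat.cast_add_one, hq', ZMod.natCast_self]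
    have hpos := ZMod.val_pos.2 hm.1
    have hlt := ZMod.val_lt m
    rw [rhoPow, rhoP_pow_infty_of_lt hpos hlt, coe_mem_nonposArc] at h
    have : 0 < chebU q m.val / chebU q (m.val - 1) :=
      div_pos (chebU_pos (by omega) (by omega)) (chebU_pos (by omega) (by omega))
    linarith
  · rintro (rfl | rfl)
    · simp [rhoPow]
    · simp [rhoPow_neg_one_infty hq]

variable {g : Equiv.Perm RInf}

noncomputable def faceVertex (q : ℕ) (g : Equiv.Perm RInf) (i : ZMod q) : RInf :=
  (g * rhoPow q i) ∞

/-- The arc of `ℝ∞` from vertex `i - 1` to vertex `i` of the face `g(V₀)` that contains no other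
vertex of the face. -/
def faceCell (q : ℕ) (g : Equiv.Perm RInf) (i : ZMod q) : Set RInf :=
  ⇑(g * rhoPow q i) '' nonposArc

lemma faceVertex_eq (hq : 2 ≤ q) (i j : ZMod q) :
    faceVertex q g j = (g * rhoPow q i) (rhoPow q (j - i) ∞) := by
  rw [faceVertex, Equiv.Perm.mul_apply, Equiv.Perm.mul_apply, ← Equiv.Perm.mul_apply (rhoPow q i),
    ← rhoPow_add hq, add_sub_cancel]

lemma faceVertex_injective (hq : 2 ≤ q) : Function.Injective (faceVertex q g) := by
  intro i j h
  rw [faceVertex_eq hq i j, faceVertex, (g * rhoPow q i).injective.eq_iff, eq_comm,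
    rhoPow_infty_eq_infty_iff hq, sub_eq_zero] at h
  exact h.symm

lemma faceVertex_mem_faceCell_iff (hq : 2 ≤ q) {i j : ZMod q} :
    faceVertex q g j ∈ faceCell q g i ↔ j = i ∨ j = i - 1 := by
  rw [faceVertex_eq hq i, faceCell, (g * rhoPow q i).injective.mem_set_image,
    rhoPow_infty_mem_nonposArc_iff hq, sub_eq_zero, sub_eq_iff_eq_add, neg_add_eq_sub]

lemma eq_of_mem_faceCell (hq : 2 ≤ q) {z : RInf} (hz : ∀ j, faceVertex q g j ≠ z) {i k : ZMod q}
    (hi : z ∈ faceCell q g i) (hk : z ∈ faceCell q g k) : i = k := by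
  have : NeZero q := ⟨by omega⟩
  by_contra hik
  obtain ⟨w, hwN, rfl⟩ := hi
  have hcell : faceCell q g k = ⇑(g * rhoPow q i) '' (⇑(rhoPow q (k - i)) '' nonposArc) := by
    rw [faceCell, ← Set.image_comp, ← Equiv.Perm.coe_mul, mul_assoc, ← rhoPow_add hq,
      add_sub_cancel]
  rw [hcell, (g * rhoPow q i).injective.mem_set_image] at hk
  obtain ⟨w', hw'N, hw'⟩ := hk
  have hw : w ∈ nonposArc ∩ nonnegArc :=
    ⟨hwN, hw' ▸ rhoPow_mem_nonnegArc (sub_ne_zero.2 (Ne.symm hik)) hw'N⟩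
  rw [nonposArc_inter_nonnegArc] at hw
  rcases hw with hw | hw <;> rw [hw] at hz
  · exact hz i rfl
  · exact hz (i - 1) (by rw [faceVertex_eq hq i, sub_sub_cancel_left, rhoPow_neg_one_infty hq])

lemma mem_faceCell_natCast (hq : 2 ≤ q) {z : RInf} {j : ℕ}
    (hz : g⁻¹ z ∈ ⇑(rhoP q ^ j) '' nonposArc) : z ∈ faceCell q g j := by
  rw [faceCell, rhoPow_natCast hq, Equiv.Perm.coe_mul, Set.image_comp]
  exact ⟨_, hz, by simp⟩

lemma exists_faceCell_of_fareyAdj (hq : 2 ≤ q) (hg : g ∈ Gq q) {u v : RInf}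
    (huv : FareyAdj q u v) : ∃ i, u ∈ faceCell q g i ∧ v ∈ faceCell q g i := by
  obtain ⟨-, h, hh, hends⟩ := huv
  obtain ⟨j, h0, hinf⟩ := exists_arc_of_mem_Gq hq (mul_mem (inv_mem hg) hh)
  rw [Equiv.Perm.mul_apply] at h0 hinf
  refine ⟨j, ?_⟩
  rcases hends with ⟨rfl, rfl⟩ | ⟨rfl, rfl⟩
  exacts [⟨mem_faceCell_natCast hq h0, mem_faceCell_natCast hq hinf⟩,
    ⟨mem_faceCell_natCast hq hinf, mem_faceCell_natCast hq h0⟩]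

lemma fareyAdj_faceVertex_add_one (hq : 2 ≤ q) (hg : g ∈ Gq q) (i : ZMod q) :
    FareyAdj q (faceVertex q g i) (faceVertex q g (i + 1)) := by
  have : Fact (1 < q) := ⟨by omega⟩
  refine ⟨fun h => one_ne_zero (left_eq_add.1 (faceVertex_injective hq h)),
    g * rhoPow q (i + 1), mul_mem hg ?_, Or.inl ⟨?_, rfl⟩⟩
  · exact pow_mem (rhoP_mem_Gq q) _
  · rw [faceVertex_eq hq (i + 1), sub_add_cancel_left, rhoPow_neg_one_infty hq]

end Face

section CyclicDistance

variable {n : ℕ}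

/-- The distance from `a` to `b` in the cycle graph on `ℤ/n`. -/
def cycDist (a b : ZMod n) : ℕ := (b - a).valMinAbs.natAbs

@[simp] lemma cycDist_self (a : ZMod n) : cycDist a a = 0 := by simp [cycDist]

lemma natAbs_valMinAbs_one_le : (1 : ZMod n).valMinAbs.natAbs ≤ 1 := by
  rcases n with _ | n
  · rfl
  · rw [ZMod.valMinAbs_natAbs_eq_min, ZMod.val_one_eq_one_mod]
    exact (min_le_left _ _).trans (Nat.mod_le _ _)

lemma cycDist_le_add_one {e : ZMod n} (he : e = 1 ∨ e = -1) (a b : ZMod n) :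
    cycDist a b ≤ cycDist (a + e) b + 1 := by
  have he' : e.valMinAbs.natAbs ≤ 1 := by
    rcases he with rfl | rfl
    · exact natAbs_valMinAbs_one_le
    · rw [ZMod.natAbs_valMinAbs_neg]
      exact natAbs_valMinAbs_one_le
  calc cycDist a b = ((b - (a + e)) + e).valMinAbs.natAbs := by rw [cycDist, sub_add_eq_sub_sub,
        sub_add_cancel]
    _ ≤ ((b - (a + e)).valMinAbs + e.valMinAbs).natAbs := ZMod.natAbs_valMinAbs_add_le _ _
    _ ≤ cycDist (a + e) b + 1 := (Int.natAbs_add_le _ _).trans (by rw [cycDist]; omega)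

lemma cycDist_eq_min [NeZero n] (a b : ZMod n) : cycDist a b = min (b - a).val (a - b).val := by
  rw [cycDist, ZMod.valMinAbs_natAbs_eq_min, ← neg_sub b a, ZMod.neg_val]
  split_ifs with h <;> simp [h]

end CyclicDistance

lemma potential_le_of_isChain {α : Type*} {R : α → α → Prop} (f : α → ℕ) (c : ℕ)
    (hf : ∀ u v, R u v → f u ≤ f v + c) {l : List α} {x y : α} (hl : l.IsChain R)
    (hx : l.head? = Option.some x) (hy : l.getLast? = Option.some y) :
    f x ≤ f y + c * (l.length - 1) ∧
      (f x = f y + c * (l.length - 1) → l.IsChain fun u v => R u v ∧ f u = f v + c) := by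
  induction l generalizing x with
  | nil => simp at hx
  | cons a t ih =>
    obtain rfl : a = x := by simpa using hx
    rcases t with _ | ⟨b, t⟩
    · obtain rfl : a = y := by simpa using hy
      exact ⟨by simp, fun _ => List.isChain_singleton a⟩
    · obtain ⟨hab, hrest⟩ := List.isChain_cons_cons.1 hl
      have hfab := hf a b hab
      obtain ⟨hle, htight⟩ := ih hrest rfl (by simpa using hy)
      simp only [List.length_cons, Nat.add_sub_cancel, Nat.mul_succ] at hle htight ⊢
      exact ⟨by omega, fun h => List.isChain_cons_cons.2 ⟨⟨hab, by omega⟩, htight (by omega)⟩⟩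

section Potential

variable {q : ℕ} {g : Equiv.Perm RInf} {B : ZMod q}

/-- Twice the distance to vertex `B` around the face `g(V₀)`, extended to every other point of
`ℝ∞` as the sum of the distances of the two ends of its cell. -/
noncomputable def facePotential (q : ℕ) (g : Equiv.Perm RInf) (B : ZMod q) (z : RInf) : ℕ :=
  open Classical in
  if h : ∃ j, faceVertex q g j = z then 2 * cycDist h.choose B
  else if h' : ∃ i, z ∈ faceCell q g i then cycDist (h'.choose - 1) B + cycDist h'.choose B
  else 0

lemma facePotential_faceVertex (hq : 2 ≤ q) (j : ZMod q) :
    facePotential q g B (faceVertex q g j) = 2 * cycDist j B := by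
  have h : ∃ c, faceVertex q g c = faceVertex q g j := ⟨j, rfl⟩
  rw [facePotential, dif_pos h, faceVertex_injective hq h.choose_spec]

lemma facePotential_of_mem_faceCell (hq : 2 ≤ q) {z : RInf} (hz : ∀ j, faceVertex q g j ≠ z)
    {i : ZMod q} (hi : z ∈ faceCell q g i) :
    facePotential q g B z = cycDist (i - 1) B + cycDist i B := by
  have h : ∃ c, z ∈ faceCell q g c := ⟨i, hi⟩
  rw [facePotential, dif_neg (not_exists.2 hz), dif_pos h,
    eq_of_mem_faceCell hq hz h.choose_spec hi]

def FaceStepToward (q : ℕ) (g : Equiv.Perm RInf) (B : ZMod q) (u v : RInf) : Prop :=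
  ∃ j e : ZMod q, (e = 1 ∨ e = -1) ∧ u = faceVertex q g j ∧ v = faceVertex q g (j + e) ∧
    cycDist (j + e) B + 1 = cycDist j B

lemma exists_faceVertex_or_facePotential_eq (hq : 2 ≤ q) {i : ZMod q} {w : RInf}
    (hw : w ∈ faceCell q g i) :
    (∃ j, faceVertex q g j = w ∧ (j = i ∨ j = i - 1)) ∨
      facePotential q g B w = cycDist (i - 1) B + cycDist i B := by
  by_cases hvert : ∃ j, faceVertex q g j = w
  · obtain ⟨j, rfl⟩ := hvert
    exact Or.inl ⟨j, rfl, (faceVertex_mem_faceCell_iff hq).1 hw⟩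
  · exact Or.inr (facePotential_of_mem_faceCell hq (not_exists.1 hvert) hw)

lemma facePotential_le_of_fareyAdj (hq : 2 ≤ q) (hg : g ∈ Gq q) {u v : RInf}
    (huv : FareyAdj q u v) :
    facePotential q g B u ≤ facePotential q g B v + 2 ∧
      (facePotential q g B u = facePotential q g B v + 2 → FaceStepToward q g B u v) := by
  obtain ⟨i, hu, hv⟩ := exists_faceCell_of_fareyAdj hq hg huv
  have hd₁ := cycDist_le_add_one (e := 1) (Or.inl rfl) (i - 1) B
  have hd₂ := cycDist_le_add_one (e := -1) (Or.inr rfl) i B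
  rw [sub_add_cancel] at hd₁
  rw [← sub_eq_add_neg] at hd₂
  rcases exists_faceVertex_or_facePotential_eq (B := B) hq hu with ⟨j, rfl, hj⟩ | hfu <;>
    rcases exists_faceVertex_or_facePotential_eq (B := B) hq hv with ⟨k, rfl, hk⟩ | hfv
  · rw [facePotential_faceVertex hq, facePotential_faceVertex hq]
    obtain ⟨e, he, rfl⟩ : ∃ e : ZMod q, (e = 1 ∨ e = -1) ∧ k = j + e := by
      rcases hj with rfl | rfl <;> rcases hk with rfl | rfl
      · exact absurd rfl huv.1
      · exact ⟨-1, Or.inr rfl, by ring⟩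
      · exact ⟨1, Or.inl rfl, by ring⟩
      · exact absurd rfl huv.1
    have := cycDist_le_add_one he j B
    exact ⟨by omega, fun h => ⟨j, e, he, rfl, rfl, by omega⟩⟩
  · rw [facePotential_faceVertex hq, hfv]
    rcases hj with rfl | rfl <;> exact ⟨by omega, fun h => by omega⟩
  · rw [facePotential_faceVertex hq, hfu]
    rcases hk with rfl | rfl <;> exact ⟨by omega, fun h => by omega⟩
  · rw [hfu, hfv]
    exact ⟨by omega, fun h => by omega⟩

end Potential

section Walks

variable {q : ℕ} {g : Equiv.Perm RInf}

noncomputable def faceWalk (q : ℕ) (g : Equiv.Perm RInf) (e : ZMod q) : ℕ → ZMod q → List RInf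
  | 0, A => [faceVertex q g A]
  | n + 1, A => faceVertex q g A :: faceWalk q g e n (A + e)

lemma length_faceWalk (e : ZMod q) (n : ℕ) (A : ZMod q) :
    (faceWalk q g e n A).length = n + 1 := by
  induction n generalizing A with
  | zero => rfl
  | succ n ih => simp [faceWalk, ih]

lemma exists_faceWalk_eq_cons (e : ZMod q) (n : ℕ) (A : ZMod q) :
    ∃ l, faceWalk q g e n A = faceVertex q g A :: l := by
  cases n <;> exact ⟨_, rfl⟩

lemma head?_faceWalk (e : ZMod q) (n : ℕ) (A : ZMod q) :
    (faceWalk q g e n A).head? = Option.some (faceVertex q g A) := by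
  cases n <;> rfl

lemma getLast?_faceWalk (e : ZMod q) (n : ℕ) (A : ZMod q) :
    (faceWalk q g e n A).getLast? = Option.some (faceVertex q g (A + n * e)) := by
  induction n generalizing A with
  | zero => simp [faceWalk]
  | succ n ih =>
    obtain ⟨l, hl⟩ := exists_faceWalk_eq_cons (g := g) e n (A + e)
    rw [faceWalk, hl, List.getLast?_cons_cons, ← hl, ih]
    push_cast
    ring_nf

lemma exists_faceVertex_of_mem_faceWalk {e : ZMod q} {n : ℕ} {A : ZMod q} {w : RInf}
    (hw : w ∈ faceWalk q g e n A) : ∃ j, faceVertex q g j = w := by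
  induction n generalizing A with
  | zero => exact ⟨A, (List.mem_singleton.1 hw).symm⟩
  | succ n ih =>
    rcases List.mem_cons.1 hw with rfl | hw
    exacts [⟨A, rfl⟩, ih hw]

lemma isPathFrom_faceWalk (hq : 2 ≤ q) (hg : g ∈ Gq q) {e : ZMod q} (he : e = 1 ∨ e = -1)
    (n : ℕ) (A : ZMod q) :
    IsPathFrom q (faceWalk q g e n A) (faceVertex q g A) (faceVertex q g (A + n * e)) := by
  refine ⟨?_, head?_faceWalk e n A, getLast?_faceWalk e n A⟩
  induction n generalizing A with
  | zero => exact List.isChain_singleton _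
  | succ n ih =>
    obtain ⟨l, hl⟩ := exists_faceWalk_eq_cons (g := g) e n (A + e)
    rw [faceWalk, hl]
    refine List.isChain_cons_cons.2 ⟨?_, hl ▸ ih (A + e)⟩
    rcases he with rfl | rfl
    · exact fareyAdj_faceVertex_add_one hq hg A
    · simpa [← sub_eq_add_neg] using (fareyAdj_faceVertex_add_one hq hg (A - 1)).symm

end Walks

section Geodesics

variable {q : ℕ} {g : Equiv.Perm RInf}

lemma cycDist_add_one_le_length (hq : 2 ≤ q) (hg : g ∈ Gq q) {A B : ZMod q} {p : List RInf}
    (hp : IsPathFrom q p (faceVertex q g A) (faceVertex q g B)) :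
    cycDist A B + 1 ≤ p.length := by
  have h := (potential_le_of_isChain (facePotential q g B) 2
    (fun _ _ huv => (facePotential_le_of_fareyAdj hq hg huv).1) hp.1 hp.2.1 hp.2.2).1
  rw [facePotential_faceVertex hq, facePotential_faceVertex hq, cycDist_self] at h
  have : p ≠ [] := by rintro rfl; exact absurd hp.2.1 (by simp)
  have := List.length_pos_of_ne_nil this
  omega

lemma isChain_faceStepToward (hq : 2 ≤ q) (hg : g ∈ Gq q) {A B : ZMod q} {p : List RInf}
    (hp : IsPathFrom q p (faceVertex q g A) (faceVertex q g B))
    (hlen : p.length = cycDist A B + 1) : p.IsChain (FaceStepToward q g B) := by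
  have h := (potential_le_of_isChain (facePotential q g B) 2
    (fun _ _ huv => (facePotential_le_of_fareyAdj hq hg huv).1) hp.1 hp.2.1 hp.2.2).2
  rw [facePotential_faceVertex hq, facePotential_faceVertex hq, cycDist_self, hlen] at h
  exact (h (by simp)).imp fun u v ⟨huv, heq⟩ => (facePotential_le_of_fareyAdj hq hg huv).2 heq

/-- Along a chain of steps toward `B` the direction never reverses, since reversing would bring
back the vertex just left, which is farther from `B`. -/
lemma eq_faceWalk_of_isChain (hq : 2 ≤ q) {A B e : ZMod q} (he : e = 1 ∨ e = -1) {p : List RInf}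
    (hchain : (faceVertex q g A :: faceVertex q g (A + e) :: p).IsChain (FaceStepToward q g B)) :
    faceVertex q g A :: faceVertex q g (A + e) :: p = faceWalk q g e (p.length + 1) A := by
  induction p generalizing A with
  | nil => rfl
  | cons w p ih =>
    obtain ⟨⟨j, e₁, -, hj, hje, hd⟩, hchain'⟩ := List.isChain_cons_cons.1 hchain
    obtain ⟨⟨k, e₂, he₂, hk, rfl, hd'⟩, -⟩ := List.isChain_cons_cons.1 hchain'
    obtain rfl := faceVertex_injective hq hj
    rw [← faceVertex_injective hq hje] at hd
    obtain rfl := faceVertex_injective hq hk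
    obtain rfl : e₂ = e := by
      rcases he with rfl | rfl <;> rcases he₂ with rfl | rfl <;> first | rfl | (simp at hd'; omega)
    rw [ih hchain']
    rfl

lemma isPathFrom_faceWalk_one (hq : 2 ≤ q) (hg : g ∈ Gq q) (A B : ZMod q) :
    IsPathFrom q (faceWalk q g 1 (B - A).val A) (faceVertex q g A) (faceVertex q g B) := by
  have : NeZero q := ⟨by omega⟩
  simpa using isPathFrom_faceWalk hq hg (Or.inl rfl) (B - A).val A

lemma isPathFrom_faceWalk_neg_one (hq : 2 ≤ q) (hg : g ∈ Gq q) (A B : ZMod q) :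
    IsPathFrom q (faceWalk q g (-1) (A - B).val A) (faceVertex q g A) (faceVertex q g B) := by
  have : NeZero q := ⟨by omega⟩
  simpa using isPathFrom_faceWalk hq hg (Or.inr rfl) (A - B).val A

lemma exists_eq_faceWalk_of_isGeodesicPath (hq : 2 ≤ q) (hg : g ∈ Gq q) {A B : ZMod q}
    (hAB : A ≠ B) {p : List RInf} (hp : IsGeodesicPath q p (faceVertex q g A) (faceVertex q g B)) :
    ∃ e : ZMod q, (e = 1 ∨ e = -1) ∧ p = faceWalk q g e (cycDist A B) A ∧
      A + cycDist A B * e = B := by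
  have : NeZero q := ⟨by omega⟩
  obtain ⟨hpath, hmin⟩ := hp
  have hlow := cycDist_add_one_le_length hq hg hpath
  have hup₁ := hmin _ (isPathFrom_faceWalk_one hq hg A B)
  have hup₂ := hmin _ (isPathFrom_faceWalk_neg_one hq hg A B)
  rw [length_faceWalk] at hup₁ hup₂
  have hd := cycDist_eq_min A B
  have hd₀ : cycDist A B ≠ 0 := by
    rw [hd]
    simp [ZMod.val_eq_zero, sub_eq_zero, hAB, Ne.symm hAB]
  have hlen : p.length = cycDist A B + 1 := by omega
  have hchain := isChain_faceStepToward hq hg hpath hlen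
  obtain ⟨x, w, p', rfl⟩ : ∃ x w p', p = x :: w :: p' := by
    rcases p with _ | ⟨x, _ | ⟨w, p'⟩⟩ <;> simp at hlen <;> first | omega | exact ⟨_, _, _, rfl⟩
  obtain ⟨j, e, he, hj, rfl, -⟩ := (List.isChain_cons_cons.1 hchain).1
  obtain rfl : x = faceVertex q g A := by simpa using hpath.2.1
  obtain rfl := faceVertex_injective hq hj
  have hwalk := eq_faceWalk_of_isChain hq he hchain
  have hlast := hpath.2.2
  rw [hwalk, getLast?_faceWalk, Option.some_inj] at hlast
  rw [show cycDist A B = p'.length + 1 by simp only [List.length_cons] at hlen; omega]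
  exact ⟨e, he, hwalk, faceVertex_injective hq hlast⟩

theorem isGeodesicPath_faceVertex_iff (hq : 2 ≤ q) (hg : g ∈ Gq q) {A B : ZMod q} (hAB : A ≠ B)
    {p : List RInf} :
    IsGeodesicPath q p (faceVertex q g A) (faceVertex q g B) ↔
      ((B - A).val ≤ (A - B).val ∧ p = faceWalk q g 1 (B - A).val A) ∨
        ((A - B).val ≤ (B - A).val ∧ p = faceWalk q g (-1) (A - B).val A) := by
  have : NeZero q := ⟨by omega⟩
  have hd := cycDist_eq_min A B
  constructor
  · intro hp
    obtain ⟨e, he, rfl, hend⟩ := exists_eq_faceWalk_of_isGeodesicPath hq hg hAB hp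
    have hlt : cycDist A B < q := hd ▸ (min_le_left _ _).trans_lt (ZMod.val_lt _)
    rcases he with rfl | rfl
    · have hval : (B - A).val = cycDist A B := by
        rw [show B - A = cycDist A B by linear_combination -hend, ZMod.val_natCast_of_lt hlt]
      exact Or.inl ⟨by omega, by rw [hval]⟩
    · have hval : (A - B).val = cycDist A B := by
        rw [show A - B = cycDist A B by linear_combination hend, ZMod.val_natCast_of_lt hlt]
      exact Or.inr ⟨by omega, by rw [hval]⟩
  · rintro (⟨hle, rfl⟩ | ⟨hle, rfl⟩)
    · refine ⟨isPathFrom_faceWalk_one hq hg A B, fun p' hp' => ?_⟩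
      have := cycDist_add_one_le_length hq hg hp'
      rw [length_faceWalk]
      omega
    · refine ⟨isPathFrom_faceWalk_neg_one hq hg A B, fun p' hp' => ?_⟩
      have := cycDist_add_one_le_length hq hg hp'
      rw [length_faceWalk]
      omega

lemma faceVertex_mem_image_V0 [NeZero q] (j : ZMod q) : faceVertex q g j ∈ ⇑g '' V0 q :=
  ⟨_, ⟨j.val, ZMod.val_lt j, rfl⟩, rfl⟩

lemma faceWalk_one_ne_faceWalk_neg_one (hq : 3 ≤ q) (A : ZMod q) {m n : ℕ} (hm : m ≠ 0)
    (hn : n ≠ 0) : faceWalk q g 1 m A ≠ faceWalk q g (-1) n A := by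
  obtain ⟨m, rfl⟩ := Nat.exists_eq_succ_of_ne_zero hm
  obtain ⟨n, rfl⟩ := Nat.exists_eq_succ_of_ne_zero hn
  intro h
  have h2 := congrArg List.head? (List.cons.inj h).2
  rw [head?_faceWalk, head?_faceWalk, Option.some_inj] at h2
  have h3 : ((2 : ℕ) : ZMod q) = 0 := by
    have := faceVertex_injective (by omega) h2
    push_cast
    linear_combination this
  rw [ZMod.natCast_eq_zero_iff] at h3
  exact absurd (Nat.le_of_dvd two_pos h3) (by omega)

lemma faceVertex_natCast [NeZero q] {k : ℕ} (hk : k < q) :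
    faceVertex q g k = g ((rhoP q ^ k) ∞) := by
  rw [faceVertex, Equiv.Perm.mul_apply, rhoPow, ZMod.val_natCast_of_lt hk]

lemma mem_image_V0_of_isGeodesicPath (hq : 2 ≤ q) (hg : g ∈ Gq q) {A B : ZMod q} (hAB : A ≠ B)
    {p : List RInf} (hp : IsGeodesicPath q p (faceVertex q g A) (faceVertex q g B)) {w : RInf}
    (hw : w ∈ p) : w ∈ ⇑g '' V0 q := by
  have : NeZero q := ⟨by omega⟩
  rcases (isGeodesicPath_faceVertex_iff hq hg hAB).1 hp with ⟨-, rfl⟩ | ⟨-, rfl⟩ <;>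
  · obtain ⟨j, rfl⟩ := exists_faceVertex_of_mem_faceWalk hw
    exact faceVertex_mem_image_V0 j

lemma exists_pair_isGeodesicPath (hq : 3 ≤ q) (hg : g ∈ Gq q) {A B : ZMod q} (hAB : A ≠ B)
    (hopp : (B - A).val = (A - B).val) :
    ∃ p₁ p₂ : List RInf, p₁ ≠ p₂ ∧ ∀ p : List RInf,
      IsGeodesicPath q p (faceVertex q g A) (faceVertex q g B) ↔ (p = p₁ ∨ p = p₂) := by
  have : NeZero q := ⟨by omega⟩
  have hne : (B - A).val ≠ 0 := (ZMod.val_ne_zero _).2 (sub_ne_zero.2 hAB.symm)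
  refine ⟨_, _, faceWalk_one_ne_faceWalk_neg_one (g := g) hq A hne (hopp ▸ hne), fun p => ?_⟩
  simp only [isGeodesicPath_faceVertex_iff (by omega) hg hAB, hopp, le_refl, true_and]

lemma existsUnique_isGeodesicPath (hq : 2 ≤ q) (hg : g ∈ Gq q) {A B : ZMod q} (hAB : A ≠ B)
    (hopp : (B - A).val ≠ (A - B).val) :
    ∃! p : List RInf, IsGeodesicPath q p (faceVertex q g A) (faceVertex q g B) := by
  simp only [isGeodesicPath_faceVertex_iff hq hg hAB]
  rcases lt_or_gt_of_ne hopp with hlt | hlt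
  · refine ⟨_, Or.inl ⟨hlt.le, rfl⟩, fun p hp => ?_⟩
    rcases hp with ⟨-, h⟩ | ⟨hle, -⟩
    exacts [h, absurd hle hlt.not_ge]
  · refine ⟨_, Or.inr ⟨hlt.le, rfl⟩, fun p hp => ?_⟩
    rcases hp with ⟨hle, -⟩ | ⟨-, h⟩
    exacts [absurd hle hlt.not_ge, h]

end Geodesics

/-- geodesic paths between two vertices of a face stay on the face,
and there are exactly two of them for opposite vertices when `q` is even, and
exactly one otherwise. -/
theorem stmt8 (q : ℕ) (hq : 3 ≤ q) (g : Equiv.Perm RInf) (hg : g ∈ Gq q)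
    (a b : ℕ) (hab : a < b) (hbq : b ≤ q - 1) (x y : RInf)
    (hx : x = g ((rhoP q ^ a) ∞)) (hy : y = g ((rhoP q ^ b) ∞)) (hxy : x ≠ y) :
    (∀ p : List RInf, IsGeodesicPath q p x y → ∀ w ∈ p, w ∈ ⇑g '' V0 q) ∧
    (if q % 2 = 0 ∧ b - a = q / 2 then
        ∃ p₁ p₂ : List RInf, p₁ ≠ p₂ ∧
          ∀ p : List RInf, IsGeodesicPath q p x y ↔ (p = p₁ ∨ p = p₂)
      else ∃! p : List RInf, IsGeodesicPath q p x y) := by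
  have : NeZero q := ⟨by omega⟩
  rw [← faceVertex_natCast (by omega)] at hx hy
  subst hx hy
  have hAB : (a : ZMod q) ≠ b := fun h => hxy (by rw [h])
  have hδ : ((b : ZMod q) - a).val = b - a := by
    rw [← Nat.cast_sub hab.le, ZMod.val_natCast_of_lt (by omega)]
  have hδ' : ((a : ZMod q) - b).val = q - (b - a) := by
    rw [← neg_sub, ZMod.neg_val, if_neg (sub_ne_zero.2 hAB.symm), hδ]
  refine ⟨fun p hp w hw => mem_image_V0_of_isGeodesicPath (by omega) hg hAB hp hw, ?_⟩
  split_ifs with hopp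
  · exact exists_pair_isGeodesicPath hq hg hAB (by omega)
  · exact existsUnique_isGeodesicPath (by omega) hg hAB (by omega)
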